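/- For all subsets A ⊆ B ⊆ Fin n, the binary-symmetric rate operator satisfies M_A·|B⟩ = |B \ A⟩ − |B⟩. -/

import Mathlib

open Matrix


/-- The Markov generator `L_α = [[-1, 0], [1, 0]]`. -/
noncomputable def Lalpha : Matrix (Fin 2) (Fin 2) ℝ := !![-1, 0; 1, 0]

/-- The Markov generator `L_β = [[0, 1], [0, -1]]`. -/
noncomputable def Lbeta : Matrix (Fin 2) (Fin 2) ℝ := !![0, 1; 0, -1]

/-- `X^(A)`: the operator on the `n`-fold tensor power `(ℝ²)^⊗n` (indexed by functions
`Fin n → Fin 2`) acting as `X` on the tensor factors in `A` and as the identity elsewhere: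
`(X^(A))_{f,g} = (∏_{i ∈ A} X_{f(i),g(i)}) · (∏_{j ∉ A} [f(j) = g(j)])`. -/
noncomputable def opOn {n : ℕ} (X : Matrix (Fin 2) (Fin 2) ℝ) (A : Finset (Fin n)) :
    Matrix (Fin n → Fin 2) (Fin n → Fin 2) ℝ :=
  fun f g => (∏ i ∈ A, X (f i) (g i)) * ∏ j ∈ Aᶜ, (if f j = g j then (1 : ℝ) else 0)

/-- `𝔏_X^A := ∑_{∅ ≠ B ⊆ A} X^(B)`. -/
noncomputable def frakLA {n : ℕ} (X : Matrix (Fin 2) (Fin 2) ℝ) (A : Finset (Fin n)) :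
    Matrix (Fin n → Fin 2) (Fin n → Fin 2) ℝ :=
  ∑ B ∈ A.powerset.filter (fun B => B.Nonempty), opOn X B

/-- The binary-symmetric rate operator `M_A := 𝔏_α^A + 𝔏_β^A`. -/
noncomputable def MA {n : ℕ} (A : Finset (Fin n)) :
    Matrix (Fin n → Fin 2) (Fin n → Fin 2) ℝ :=
  frakLA Lalpha A + frakLA Lbeta A

/-- `|B⟩`: the standard basis vector of `ℝ^(Fin n → Fin 2)` at the indicator function of
`B ⊆ Fin n`. -/
noncomputable def ket {n : ℕ} (B : Finset (Fin n)) : (Fin n → Fin 2) → ℝ :=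
  fun f => if f = (fun i => if i ∈ B then 1 else 0) then 1 else 0

/-!
Expanding `∏_{i ∈ A} (X + 1)` over subsets gives `∑_{S ⊆ A} X^(S) = (X + 1)^(A)`, so
`𝔏_X^A = (X + 1)^(A) - 1`. The column of index `1` of `L_α + 1` is `e₁` and that of
`L_β + 1` is `e₀`; since the indicator of `B` is `1` on `A`, `(L_α + 1)^(A)` fixes `|B⟩` and
`(L_β + 1)^(A)` sends it to `|B \ A⟩`.
-/

def ketIndex {n : ℕ} (B : Finset (Fin n)) : Fin n → Fin 2 := fun i => if i ∈ B then 1 else 0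

lemma ket_apply {n : ℕ} (B : Finset (Fin n)) (f : Fin n → Fin 2) :
    ket B f = if f = ketIndex B then 1 else 0 :=
  rfl

lemma ket_eq_single {n : ℕ} (B : Finset (Fin n)) : ket B = Pi.single (ketIndex B) 1 := by
  funext f
  rw [ket_apply, Pi.single_apply]

lemma mulVec_ket {n : ℕ} (M : Matrix (Fin n → Fin 2) (Fin n → Fin 2) ℝ) (B : Finset (Fin n)) :
    M *ᵥ ket B = fun f => M f (ketIndex B) := by
  rw [ket_eq_single, mulVec_single_one]
  rfl

lemma opOn_empty {n : ℕ} (X : Matrix (Fin 2) (Fin 2) ℝ) :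
    opOn X (∅ : Finset (Fin n)) = 1 := by
  ext f g
  simp [opOn, one_apply, Finset.prod_boole, funext_iff]

lemma sum_powerset_opOn {n : ℕ} (X : Matrix (Fin 2) (Fin 2) ℝ) (A : Finset (Fin n)) :
    ∑ S ∈ A.powerset, opOn X S = opOn (X + 1) A := by
  ext f g
  have hcompl : ∀ S ⊆ A, ∏ j ∈ Sᶜ, (if f j = g j then (1 : ℝ) else 0)
      = (∏ j ∈ A \ S, if f j = g j then 1 else 0) * ∏ j ∈ Aᶜ, if f j = g j then 1 else 0 := by
    intro S hS
    rw [← Finset.prod_union (disjoint_compl_right.mono_left Finset.sdiff_subset)]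
    congr 1
    ext j
    by_cases hj : j ∈ S <;> by_cases hj' : j ∈ A <;> simp_all [Finset.subset_iff]
  simp only [opOn, Matrix.sum_apply, Matrix.add_apply, one_apply, Finset.prod_add, Finset.sum_mul]
  refine Finset.sum_congr rfl fun S hS => ?_
  rw [hcompl S (Finset.mem_powerset.mp hS), mul_assoc]

lemma frakLA_eq {n : ℕ} (X : Matrix (Fin 2) (Fin 2) ℝ) (A : Finset (Fin n)) :
    frakLA X A = opOn (X + 1) A - 1 := by
  have hnonempty : A.powerset.filter (fun S => S.Nonempty) = A.powerset.erase ∅ := by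
    ext S
    simp [Finset.nonempty_iff_ne_empty, and_comm]
  rw [frakLA, hnonempty, Finset.sum_erase_eq_sub (Finset.empty_mem_powerset A), opOn_empty,
    sum_powerset_opOn]

lemma opOn_apply_of_col_eq_single {n : ℕ} {Y : Matrix (Fin 2) (Fin 2) ℝ} {A : Finset (Fin n)}
    {g h : Fin n → Fin 2} (hY : ∀ i ∈ A, ∀ a, Y a (g i) = if a = h i then 1 else 0)
    (hgh : ∀ i ∉ A, g i = h i) (f : Fin n → Fin 2) :
    opOn Y A f g = if f = h then 1 else 0 := by
  have hout : ∀ j ∈ Aᶜ, (if f j = g j then (1 : ℝ) else 0) = if f j = h j then 1 else 0 :=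
    fun j hj => by rw [hgh j (Finset.mem_compl.mp hj)]
  rw [opOn, Finset.prod_congr rfl fun i hi => hY i hi (f i), Finset.prod_congr rfl hout,
    Finset.prod_mul_prod_compl, Fintype.prod_boole]
  simp only [← funext_iff]

lemma Lalpha_add_one_apply_one (a : Fin 2) : (Lalpha + 1) a 1 = if a = 1 then 1 else 0 := by
  fin_cases a <;> simp [Lalpha]

lemma Lbeta_add_one_apply_one (a : Fin 2) : (Lbeta + 1) a 1 = if a = 0 then 1 else 0 := by
  fin_cases a <;> simp [Lbeta]

/-- For `A ⊆ B ⊆ Fin n`, `M_A·|B⟩ = |B \ A⟩ − |B⟩`. -/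
theorem MA_ket_subset (n : ℕ) (A B : Finset (Fin n)) (h : A ⊆ B) :
    (MA A).mulVec (ket B) = ket (B \ A) - ket B := by
  have hB : ∀ i ∈ A, ketIndex B i = 1 := fun i hi => if_pos (h hi)
  have hα : ∀ f, opOn (Lalpha + 1) A f (ketIndex B) = ket B f :=
    opOn_apply_of_col_eq_single (h := ketIndex B)
      (fun i hi a => by rw [hB i hi, Lalpha_add_one_apply_one]) (fun _ _ => rfl)
  have hβ : ∀ f, opOn (Lbeta + 1) A f (ketIndex B) = ket (B \ A) f :=
    opOn_apply_of_col_eq_single (h := ketIndex (B \ A))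
      (fun i hi a => by
        rw [hB i hi, Lbeta_add_one_apply_one,
          show ketIndex (B \ A) i = 0 from if_neg (by simp [hi])])
      (fun i hi => by simp [ketIndex, hi])
  funext f
  simp only [mulVec_ket, MA, frakLA_eq, Matrix.add_apply, Matrix.sub_apply, hα, hβ, one_apply,
    Pi.sub_apply, ← ket_apply]
  ring
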